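/- Suppose Assumptions on the splitting hold: H Hilbert, V_ℓ reflexive Banach spaces in Gelfand triples with H, operators A_ℓ^n : V_ℓ → V_ℓ* coercive (⟨A_ℓ^n v, v⟩ + λ ≥ μ|v|_{V_ℓ}^p, μ > 0) and the splitting scheme (U_ℓ^n − U^{n−1})/k + s A_ℓ^n U_ℓ^n = s f_ℓ^n with U^n = (1/s)∑_ℓ U_ℓ^n. Then the single-step energy estimate holds: ‖U_ℓ^n‖_H² − ‖U^{n−1}‖_H² + ‖U_ℓ^n − U^{n−1}‖_H² + k s μ |U_ℓ^n|_{V_ℓ}^p ≤ 2 k s c₁ ‖f_ℓ^n‖_{V_ℓ*} ‖U_ℓ^n‖_H + 2 k s c₂ ‖f_ℓ^n‖_{V_ℓ*}^q + 2 k s λ, where c₁ = c_{V_ℓ} and c₂ = c₁^q (pμ)^{1−q}/(q 2^{1−q}). -/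

import Mathlib

/-!
Test the scheme with `U` itself. The identity `‖x‖² - ‖y‖² + ‖x - y‖² = 2⟪x - y, x⟫` turns the
time-difference term into the left-hand side, coercivity bounds `⟪A U, U⟫` from below, and
`f U ≤ ‖f‖ ‖U‖ ≤ c_V ‖f‖ (‖U‖_H + |U|_V)`. The seminorm part of the last bound is absorbed by
Young's inequality with weight `p μ / 2`, which costs half of the coercivity term.
-/

open scoped RealInnerProductSpace

namespace Real

theorem young_inequality_of_nonneg_weighted {a b p q ε : ℝ} (ha : 0 ≤ a) (hb : 0 ≤ b)
    (hε : 0 < ε) (hpq : p.HolderConjugate q) :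
    a * b ≤ ε * a ^ p / p + ε ^ (1 - q) * b ^ q / q := by
  have hp := hpq.ne_zero
  have h := young_inequality_of_nonneg (mul_nonneg (rpow_nonneg hε.le (1 / p)) ha)
    (mul_nonneg (rpow_nonneg hε.le (-(1 / p))) hb) hpq
  have hprod : ε ^ (1 / p) * ε ^ (-(1 / p)) = 1 := by rw [← rpow_add hε]; simp
  have hexp : -(1 / p) * q = 1 - q := by
    field_simp; linarith [hpq.mul_eq_add]
  rw [mul_rpow (rpow_nonneg hε.le _) ha, mul_rpow (rpow_nonneg hε.le _) hb,
    ← rpow_mul hε.le, ← rpow_mul hε.le, one_div_mul_cancel hp, rpow_one, hexp] at h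
  -- Young's inequality for `ε ^ (1 / p) * a` and `ε ^ (-(1 / p)) * b`.
  calc a * b = ε ^ (1 / p) * a * (ε ^ (-(1 / p)) * b) := by linear_combination (-(a * b)) * hprod
    _ ≤ _ := h

end Real

theorem mul_le_half_mul_rpow_add_mul_rpow {p q μ c F a : ℝ} (hp : 1 < p) (hq : q = p / (p - 1))
    (hμ : 0 < μ) (hc : 0 ≤ c) (hF : 0 ≤ F) (ha : 0 ≤ a) :
    c * F * a ≤ μ / 2 * a ^ p + c ^ q * (p * μ) ^ (1 - q) / (q * 2 ^ (1 - q)) * F ^ q := by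
  have hpq : p.HolderConjugate q := (Real.holderConjugate_iff_eq_conjExponent hp).2 hq
  have h := Real.young_inequality_of_nonneg_weighted ha (mul_nonneg hc hF)
    (by positivity : 0 < p * μ / 2) hpq
  rw [Real.mul_rpow hc hF, Real.div_rpow (by positivity) zero_le_two] at h
  calc c * F * a = a * (c * F) := by ring
    _ ≤ _ := h
    _ = _ := by field_simp

theorem norm_sq_sub_norm_sq_add_norm_sub_sq {E : Type*} [NormedAddCommGroup E]
    [InnerProductSpace ℝ E] (x y : E) :
    ‖x‖ ^ 2 - ‖y‖ ^ 2 + ‖x - y‖ ^ 2 = 2 * ⟪x - y, x⟫ := by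
  rw [norm_sub_sq_real, inner_sub_left, real_inner_self_eq_norm_sq, real_inner_comm]
  ring

theorem stmt_15_general
    {Vl H : Type*} [NormedAddCommGroup Vl] [NormedSpace ℝ Vl]
    [NormedAddCommGroup H] [InnerProductSpace ℝ H]
    (j : Vl →L[ℝ] H)
    (sv : Seminorm ℝ Vl) (cV : ℝ) (hcV : 0 < cV)
    (hnorm : ∀ v : Vl, ‖v‖ ≤ cV * (‖j v‖ + sv v))
    (p q lam mu : ℝ) (hp : 1 < p) (hq : q = p / (p - 1))
    (hmu : 0 < mu)
    (A : Vl → StrongDual ℝ Vl)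
    (hcoer : ∀ v : Vl, A v v + lam ≥ mu * (sv v) ^ p)
    (s : ℕ) (k : ℝ) (hk : 0 < k)
    (f : StrongDual ℝ Vl) (Uprev : H) (U : Vl)
    (hscheme : ∀ v : Vl, ⟪j U - Uprev, j v⟫ / k + (s : ℝ) * A U v = (s : ℝ) * f v) :
    ‖j U‖ ^ 2 - ‖Uprev‖ ^ 2 + ‖j U - Uprev‖ ^ 2 + k * s * mu * (sv U) ^ p
      ≤ 2 * k * s * cV * ‖f‖ * ‖j U‖
        + 2 * k * s * (cV ^ q * (p * mu) ^ (1 - q) / (q * 2 ^ (1 - q))) * ‖f‖ ^ q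
        + 2 * k * s * lam := by
  have hks : 0 ≤ 2 * k * s := by positivity
  have htest : ⟪j U - Uprev, j U⟫ = k * s * (f U - A U U) := by
    have h := hscheme U
    field_simp at h
    linear_combination h
  have hdual : f U ≤ ‖f‖ * (cV * (‖j U‖ + sv U)) :=
    (le_abs_self _).trans <| (f.le_opNorm U).trans <|
      mul_le_mul_of_nonneg_left (hnorm U) (norm_nonneg f)
  have hyoung := mul_le_half_mul_rpow_add_mul_rpow hp hq hmu hcV.le (norm_nonneg f)
    (apply_nonneg sv U)
  rw [norm_sq_sub_norm_sq_add_norm_sub_sq, htest]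
  linarith [mul_le_mul_of_nonneg_left (hcoer U) hks, mul_le_mul_of_nonneg_left hdual hks,
    mul_le_mul_of_nonneg_left hyoung hks]

/-- Single-step energy estimate for the sum splitting scheme. -/
theorem stmt_15
    {Vl H : Type*} [NormedAddCommGroup Vl] [NormedSpace ℝ Vl]
    [NormedAddCommGroup H] [InnerProductSpace ℝ H]
    (j : Vl →L[ℝ] H) (hj : DenseRange j)
    (sv : Seminorm ℝ Vl) (cV : ℝ) (hcV : 0 < cV)
    (hnorm : ∀ v : Vl, ‖v‖ ≤ cV * (‖j v‖ + sv v))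
    (p q lam mu : ℝ) (hp : 1 < p) (hq : q = p / (p - 1))
    (hlam : 0 ≤ lam) (hmu : 0 < mu)
    (A : Vl → StrongDual ℝ Vl)
    (hcoer : ∀ v : Vl, A v v + lam ≥ mu * (sv v) ^ p)
    (s : ℕ) (hs : 1 ≤ s) (k : ℝ) (hk : 0 < k)
    (f : StrongDual ℝ Vl) (Uprev : H) (U : Vl)
    (hscheme : ∀ v : Vl, ⟪j U - Uprev, j v⟫ / k + (s : ℝ) * A U v = (s : ℝ) * f v) :
    ‖j U‖ ^ 2 - ‖Uprev‖ ^ 2 + ‖j U - Uprev‖ ^ 2 + k * s * mu * (sv U) ^ p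
      ≤ 2 * k * s * cV * ‖f‖ * ‖j U‖
        + 2 * k * s * (cV ^ q * (p * mu) ^ (1 - q) / (q * 2 ^ (1 - q))) * ‖f‖ ^ q
        + 2 * k * s * lam :=
  stmt_15_general j sv cV hcV hnorm p q lam mu hp hq hmu A hcoer s k hk f Uprev U hscheme
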